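/- There is a bijection between automorphisms of the dutch windmill graph D_n^(k+1) restricted to its non-central vertices and automorphisms of D_n^k acting on its edges; consequently D'(D_n^k) = D(D_n^(k+1)) for all n ≥ 2 and k ≥ 3. -/

import Mathlib

open SimpleGraph

/-- The distinguishing index: least number of labels in an edge labeling
preserved only by the identity automorphism. -/
noncomputable def distinguishingIndex {V : Type*} (G : SimpleGraph V) : ℕ :=
  sInf {d : ℕ | ∃ f : Sym2 V → Fin d,
    ∀ φ : G ≃g G, (∀ e ∈ G.edgeSet, f (Sym2.map ⇑φ e) = f e) → ∀ v, φ v = v}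

/-- The distinguishing number: least number of labels in a vertex labeling
preserved only by the identity automorphism. -/
noncomputable def distinguishingNumber {V : Type*} (G : SimpleGraph V) : ℕ :=
  sInf {d : ℕ | ∃ f : V → Fin d,
    ∀ φ : G ≃g G, (∀ v, f (φ v) = f v) → ∀ v, φ v = v}

/-- The dutch windmill graph `D_n^k`: `n` copies of the cycle `C_k`
sharing one common central vertex (`none`). -/
def windmill (n k : ℕ) : SimpleGraph (Option (Fin n × Fin (k - 1))) :=
  SimpleGraph.fromRel (fun a b =>
    match a, b with
    | none, some (_, j) => j.val = 0 ∨ j.val = k - 2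
    | some (i, j), some (i', j') => i = i' ∧ j'.val = j.val + 1
    | _, _ => False)

/-!
Every automorphism of `D_n^k` (`n ≥ 2`, `k ≥ 3`) fixes the centre, the only vertex with more
than two neighbours, so it permutes the `n` blades (the paths of `k - 1` non-central vertices)
and maps each blade onto its image either in order or reversed. Conversely every such choice
`(σ, ε)` of a permutation and of reversal flags is an automorphism, and different choices are
different automorphisms; hence `Aut(D_n^k) ≃ S_n × 2^n` for every `k ≥ 3`.

The `t`-th edge of blade `i` of `D_n^k` corresponds to the `t`-th vertex of blade `i` of
`D_n^(k+1)`, and this correspondence commutes with the action of each `(σ, ε)`. So distinguishing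
edge labelings of `D_n^k` and distinguishing vertex labelings of `D_n^(k+1)` (whose value at the
fixed centre is irrelevant) are both exactly the labelings of `Fin n × Fin k` preserved by no
nontrivial `(σ, ε)`.
-/

namespace SimpleGraph

variable {m : ℕ}

theorem pathGraph_adj_rev {a b : Fin m} :
    (pathGraph m).Adj a.rev b.rev ↔ (pathGraph m).Adj a b := by
  simp only [pathGraph_adj, Fin.val_rev]
  omega

def pathGraphRevIso (m : ℕ) : pathGraph m ≃g pathGraph m :=
  ⟨Fin.revPerm, pathGraph_adj_rev⟩

theorem pathGraph_hom_apply_eq_self_of_injective [NeZero m] (q : pathGraph m →g pathGraph m)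
    (hq : Function.Injective q) (h0 : q 0 = 0) (a : Fin m) : q a = a := by
  obtain ⟨a, ha⟩ := a
  induction a using Nat.strong_induction_on with
  | _ a ih =>
    rcases a with _ | b
    · exact h0
    · have hb : q ⟨b, by omega⟩ = ⟨b, by omega⟩ := ih b (by omega) _
      have hadj := q.map_adj (pathGraph_adj.2 (Or.inl rfl) :
        (pathGraph m).Adj ⟨b, by omega⟩ ⟨b + 1, ha⟩)
      rw [hb, pathGraph_adj] at hadj
      simp only at hadj
      refine Fin.ext (hadj.resolve_right fun h => ?_).symm
      obtain ⟨c, rfl⟩ : ∃ c, b = c + 1 := ⟨b - 1, by omega⟩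
      have hc : q ⟨c, by omega⟩ = q ⟨c + 1 + 1, ha⟩ :=
        (ih c (by omega) _).trans (Fin.ext (by simp only; omega))
      exact absurd (congrArg Fin.val (hq hc)) (by simp only; omega)

end SimpleGraph

section

variable {n m k : ℕ}

def bladeMap (σ : Equiv.Perm (Fin n)) (ε : Fin n → Bool) : Equiv.Perm (Fin n × Fin m) :=
  Equiv.prodShear σ fun i => if ε i then Fin.revPerm else Equiv.refl _

@[simp]
theorem bladeMap_apply (σ : Equiv.Perm (Fin n)) (ε : Fin n → Bool) (x : Fin n × Fin m) :
    bladeMap σ ε x = (σ x.1, if ε x.1 then x.2.rev else x.2) := by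
  simp only [bladeMap, Equiv.prodShear_apply]
  split_ifs <;> rfl

theorem bladeMap_injective (hm : 2 ≤ m) :
    Function.Injective fun z : Equiv.Perm (Fin n) × (Fin n → Bool) =>
      bladeMap (m := m) z.1 z.2 := by
  rintro ⟨σ, ε⟩ ⟨σ', ε'⟩ h
  have key (i : Fin n) := congrArg (fun e : Equiv.Perm _ => e (i, ⟨0, by omega⟩)) h
  simp only [bladeMap_apply, Prod.mk.injEq] at key
  have hrev : (⟨0, by omega⟩ : Fin m).rev ≠ ⟨0, by omega⟩ := by
    simp only [ne_eq, Fin.ext_iff, Fin.val_rev]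
    omega
  refine Prod.ext (Equiv.ext fun i => (key i).1) (funext fun i => ?_)
  have h2 := (key i).2
  cases hε : ε i <;> cases hε' : ε' i <;> simp [hε, hε', hrev, hrev.symm] at h2 ⊢

theorem exists_eq_bladeMap [NeZero m] (e : Equiv.Perm (Fin n × Fin m))
    (hadj : ∀ x y, x.1 = y.1 → (pathGraph m).Adj x.2 y.2 →
      (e x).1 = (e y).1 ∧ (pathGraph m).Adj (e x).2 (e y).2)
    (hend : ∀ i, (e (i, 0)).2 = 0 ∨ (e (i, 0)).2 = Fin.rev 0) :
    ∃ σ ε, e = bladeMap σ ε := by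
  have hfst (i : Fin n) (j j' : Fin m) : (e (i, j)).1 = (e (i, j')).1 := by
    induction (reachable_iff_reflTransGen j j').1 (pathGraph_preconnected m j j') with
    | refl => rfl
    | @tail b c _ hbc ih => exact ih.trans (hadj (i, b) (i, c) rfl hbc).1
  let q (i : Fin n) : pathGraph m →g pathGraph m :=
    ⟨fun j => (e (i, j)).2, fun {a b} h => (hadj (i, a) (i, b) rfl h).2⟩
  have hq (i : Fin n) : Function.Injective (q i) := fun j j' h => by
    simpa using e.injective (Prod.ext (hfst i j j') h)
  have hσ : Function.Injective fun i => (e (i, 0)).1 := fun i i' h => by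
    obtain ⟨j, hj⟩ := Finite.surjective_of_injective (hq i) (e (i', 0)).2
    exact congrArg Prod.fst (e.injective (Prod.ext ((hfst i j 0).trans h) hj))
  refine ⟨Equiv.ofBijective _ hσ.bijective_of_finite, fun i => (e (i, 0)).2 ≠ 0, ?_⟩
  ext1 ⟨i, j⟩
  refine Prod.ext (hfst i j 0) ?_
  by_cases h : (e (i, 0)).2 = 0
  · simpa [q, h] using pathGraph_hom_apply_eq_self_of_injective (q i) (hq i) h j
  · have h0 : ((pathGraphRevIso m).toHom.comp (q i)) 0 = 0 := by
      simpa [q, pathGraphRevIso, Fin.rev_eq_iff, h] using hend i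
    have := pathGraph_hom_apply_eq_self_of_injective ((pathGraphRevIso m).toHom.comp (q i))
      (Fin.rev_injective.comp (hq i)) h0 j
    simpa [q, h, pathGraphRevIso, Fin.rev_eq_iff] using this

@[simp]
theorem windmill_adj_none_some (x : Fin n × Fin (k - 1)) :
    (windmill n k).Adj none (some x) ↔ (x.2 : ℕ) = 0 ∨ (x.2 : ℕ) = k - 2 := by
  simp [windmill]

@[simp]
theorem windmill_adj_some_none (x : Fin n × Fin (k - 1)) :
    (windmill n k).Adj (some x) none ↔ (x.2 : ℕ) = 0 ∨ (x.2 : ℕ) = k - 2 := by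
  rw [adj_comm, windmill_adj_none_some]

@[simp]
theorem windmill_adj_some_some (x y : Fin n × Fin (k - 1)) :
    (windmill n k).Adj (some x) (some y) ↔ x.1 = y.1 ∧ (pathGraph (k - 1)).Adj x.2 y.2 := by
  obtain ⟨i, j⟩ := x
  obtain ⟨i', j'⟩ := y
  simp only [windmill, fromRel_adj, pathGraph_adj, ne_eq, Option.some.injEq, Prod.mk.injEq]
  constructor
  · rintro ⟨-, ⟨rfl, h⟩ | ⟨rfl, h⟩⟩ <;> omega
  · rintro ⟨rfl, h⟩
    refine ⟨fun h' => ?_, ?_⟩ <;> omega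

theorem windmill_adj_none_bladeMap (σ : Equiv.Perm (Fin n)) (ε : Fin n → Bool)
    (x : Fin n × Fin (k - 1)) :
    (windmill n k).Adj none (some (bladeMap σ ε x)) ↔ (windmill n k).Adj none (some x) := by
  have := x.2.isLt
  simp only [windmill_adj_none_some, bladeMap_apply]
  split
  · simp only [Fin.val_rev]; omega
  · rfl

theorem windmill_adj_some_bladeMap (σ : Equiv.Perm (Fin n)) (ε : Fin n → Bool)
    (x y : Fin n × Fin (k - 1)) :
    (windmill n k).Adj (some (bladeMap σ ε x)) (some (bladeMap σ ε y)) ↔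
      (windmill n k).Adj (some x) (some y) := by
  simp only [windmill_adj_some_some, bladeMap_apply, σ.injective.eq_iff]
  refine and_congr_right fun h => ?_
  rw [h]
  split
  · exact pathGraph_adj_rev
  · rfl

def windmillAut (k : ℕ) (σ : Equiv.Perm (Fin n)) (ε : Fin n → Bool) :
    windmill n k ≃g windmill n k where
  toEquiv := (bladeMap σ ε).optionCongr
  map_rel_iff' := by
    rintro (_ | x) (_ | y)
    · simp
    · exact windmill_adj_none_bladeMap σ ε y
    · exact (adj_comm _ _ _).trans ((windmill_adj_none_bladeMap σ ε x).trans (adj_comm _ _ _))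
    · exact windmill_adj_some_bladeMap σ ε x y

@[simp]
theorem windmillAut_none (σ : Equiv.Perm (Fin n)) (ε : Fin n → Bool) :
    windmillAut k σ ε none = none := rfl

@[simp]
theorem windmillAut_some (σ : Equiv.Perm (Fin n)) (ε : Fin n → Bool)
    (x : Fin n × Fin (k - 1)) :
    windmillAut k σ ε (some x) = some (bladeMap σ ε x) := rfl

theorem windmillAut_injective (hk : 3 ≤ k) :
    Function.Injective fun z : Equiv.Perm (Fin n) × (Fin n → Bool) => windmillAut k z.1 z.2 :=
  fun _ _ h =>
    bladeMap_injective (by omega) (Equiv.optionCongr_injective (congrArg RelIso.toEquiv h))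

theorem windmillAut_apply_eq_self_iff (hk : 3 ≤ k) (σ : Equiv.Perm (Fin n))
    (ε : Fin n → Bool) :
    (∀ v, windmillAut k σ ε v = v) ↔ σ = 1 ∧ ε = fun _ => false := by
  refine ⟨fun h => ?_, ?_⟩
  · have := windmillAut_injective hk (a₁ := (σ, ε)) (a₂ := (1, fun _ => false))
      (RelIso.ext fun v => (h v).trans (by cases v <;> simp))
    exact Prod.ext_iff.1 this
  · rintro ⟨rfl, rfl⟩ (_ | x) <;> simp

-- Position `c` on the `i`-th cycle of `D_n^k`: the centre sits at position `0` (and at every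
-- `c ≥ k`, so that position `k` closes the cycle), the blade vertex `(i, j)` at position `j + 1`.
def windmillVertex (k : ℕ) (i : Fin n) (c : ℕ) : Option (Fin n × Fin (k - 1)) :=
  if h : 0 < c ∧ c < k then some (i, ⟨c - 1, by omega⟩) else none

@[simp, grind =]
theorem windmillVertex_eq_none_iff {i : Fin n} {c : ℕ} :
    windmillVertex k i c = none ↔ c = 0 ∨ k ≤ c := by
  simp only [windmillVertex, dite_eq_right_iff, reduceCtorEq, imp_false, not_and, not_lt]
  omega

@[simp, grind =]
theorem windmillVertex_eq_some_iff {i : Fin n} {c : ℕ} {x : Fin n × Fin (k - 1)} :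
    windmillVertex k i c = some x ↔ x.1 = i ∧ (x.2 : ℕ) + 1 = c := by
  have := x.2.isLt
  unfold windmillVertex
  split_ifs
  · simp only [Option.some.injEq, Prod.ext_iff, Fin.ext_iff, eq_comm]
    omega
  · simp only [false_iff, not_and]
    omega

theorem windmillVertex_eq_windmillVertex_iff {i i' : Fin n} {c c' : ℕ} :
    windmillVertex k i c = windmillVertex k i' c' ↔
      (c = 0 ∨ k ≤ c) ∧ (c' = 0 ∨ k ≤ c') ∨ i = i' ∧ c = c' ∧ 0 < c ∧ c < k := by
  unfold windmillVertex
  split_ifs <;> grind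

theorem windmill_neighborSet_some_subset (x : Fin n × Fin (k - 1)) :
    (windmill n k).neighborSet (some x) ⊆
      {windmillVertex k x.1 x.2, windmillVertex k x.1 (x.2 + 2)} := by
  have := x.2.isLt
  rintro (_ | y) hy <;>
    simp only [mem_neighborSet, windmill_adj_some_none, windmill_adj_some_some,
      pathGraph_adj] at hy <;>
    grind

theorem encard_windmill_neighborSet_some_le_two (x : Fin n × Fin (k - 1)) :
    ((windmill n k).neighborSet (some x)).encard ≤ 2 := by
  refine (Set.encard_le_encard (windmill_neighborSet_some_subset x)).trans ?_
  exact (Set.encard_insert_le _ _).trans (by rw [Set.encard_singleton, one_add_one_eq_two])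

theorem three_le_encard_windmill_neighborSet_none (hn : 2 ≤ n) (hk : 3 ≤ k) :
    3 ≤ ((windmill n k).neighborSet none).encard := by
  let a : Fin n × Fin (k - 1) := (⟨0, by omega⟩, ⟨0, by omega⟩)
  let b : Fin n × Fin (k - 1) := (⟨1, by omega⟩, ⟨0, by omega⟩)
  let c : Fin n × Fin (k - 1) := (⟨0, by omega⟩, ⟨k - 2, by omega⟩)
  have hsub : {some a, some b, some c} ⊆ (windmill n k).neighborSet none := by
    simp [Set.insert_subset_iff, a, b, c]
  refine le_of_eq_of_le ?_ (Set.encard_le_encard hsub)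
  rw [eq_comm, Set.encard_eq_three]
  have hac : some a ≠ some c := by
    simp only [a, c, ne_eq, Option.some.injEq, Prod.mk.injEq, Fin.mk.injEq, true_and]
    omega
  exact ⟨_, _, _, by simp [a, b], hac, by simp [b, c], rfl⟩

theorem windmill_iso_apply_none (hn : 2 ≤ n) (hk : 3 ≤ k)
    (φ : windmill n k ≃g windmill n k) :
    φ none = none := by
  rcases hφ : φ none with _ | x
  · rfl
  have hle : ((windmill n k).neighborSet none).encard ≤
      ((windmill n k).neighborSet (some x)).encard :=
    hφ ▸ Set.encard_le_encard_of_injOn (fun _ hv => φ.map_adj_iff.2 hv) φ.injective.injOn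
  have := (three_le_encard_windmill_neighborSet_none hn hk).trans
    (hle.trans (encard_windmill_neighborSet_some_le_two x))
  norm_num at this

theorem windmillAut_surjective (hn : 2 ≤ n) (hk : 3 ≤ k) :
    Function.Surjective fun z : Equiv.Perm (Fin n) × (Fin n → Bool) =>
      windmillAut k z.1 z.2 := by
  intro φ
  have : NeZero (k - 1) := ⟨by omega⟩
  have hnone := windmill_iso_apply_none hn hk φ
  set e := Equiv.removeNone φ.toEquiv
  have he (x : Fin n × Fin (k - 1)) : φ (some x) = some (e x) := by
    refine (Equiv.removeNone_some _ ?_).symm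
    rcases h : φ (some x) with _ | y
    · exact absurd (φ.injective (h.trans hnone.symm)) (by simp)
    · exact ⟨y, rfl⟩
  obtain ⟨σ, ε, hσε⟩ := exists_eq_bladeMap e
    (fun x y h1 h2 => by
      simpa [he] using φ.map_adj_iff.2 ((windmill_adj_some_some x y).2 ⟨h1, h2⟩))
    (fun i => by
      have := φ.map_adj_iff.2 ((windmill_adj_none_some (i, 0)).2 (Or.inl rfl))
      simp only [hnone, he, windmill_adj_none_some] at this
      simp only [Fin.ext_iff, Fin.val_rev, Fin.val_zero] at this ⊢
      omega)
  refine ⟨(σ, ε), RelIso.ext ?_⟩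
  rintro (_ | x)
  · exact hnone.symm
  · simp [he, hσε]

noncomputable def windmillAutEquiv (hn : 2 ≤ n) (hk : 3 ≤ k) :
    Equiv.Perm (Fin n) × (Fin n → Bool) ≃ (windmill n k ≃g windmill n k) :=
  Equiv.ofBijective _ ⟨windmillAut_injective hk, windmillAut_surjective hn hk⟩

def windmillEdge (k : ℕ) (x : Fin n × Fin k) : Sym2 (Option (Fin n × Fin (k - 1))) :=
  s(windmillVertex k x.1 x.2, windmillVertex k x.1 (x.2 + 1))

theorem windmillEdge_injective (hk : 3 ≤ k) : Function.Injective (windmillEdge (n := n) k) := by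
  rintro ⟨i, t⟩ ⟨i', t'⟩ h
  have := t.isLt
  have := t'.isLt
  simp only [windmillEdge, Sym2.eq_iff, windmillVertex_eq_windmillVertex_iff] at h
  simp only [Prod.ext_iff, Fin.ext_iff] at h ⊢
  omega

theorem windmillEdge_mem_edgeSet (hk : 2 ≤ k) (x : Fin n × Fin k) :
    windmillEdge k x ∈ (windmill n k).edgeSet := by
  have := x.2.isLt
  rw [windmillEdge, mem_edgeSet]
  rcases h1 : windmillVertex k x.1 x.2 with _ | a <;>
    rcases h2 : windmillVertex k x.1 (x.2 + 1) with _ | b <;>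
    simp only [windmill_adj_none_some, windmill_adj_some_none, windmill_adj_some_some,
      pathGraph_adj, SimpleGraph.irrefl] <;>
    grind

theorem exists_windmillEdge_eq {e : Sym2 (Option (Fin n × Fin (k - 1)))}
    (he : e ∈ (windmill n k).edgeSet) : ∃ x, windmillEdge k x = e := by
  induction e using Sym2.ind with | _ a b => ?_
  rw [mem_edgeSet] at he
  rcases a with _ | y <;> rcases b with _ | z
  · exact absurd he (windmill n k).irrefl
  all_goals simp only [windmill_adj_none_some, windmill_adj_some_none, windmill_adj_some_some,
    pathGraph_adj] at he
  · have := z.2.isLt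
    rcases he with h | h
    · exact ⟨(z.1, ⟨0, by omega⟩), by grind [windmillEdge]⟩
    · exact ⟨(z.1, ⟨k - 1, by omega⟩), by grind [windmillEdge]⟩
  · have := y.2.isLt
    rcases he with h | h
    · exact ⟨(y.1, ⟨0, by omega⟩), by grind [windmillEdge]⟩
    · exact ⟨(y.1, ⟨k - 1, by omega⟩), by grind [windmillEdge]⟩
  · have := y.2.isLt
    have := z.2.isLt
    obtain ⟨h1, h | h⟩ := he
    · exact ⟨(y.1, ⟨z.2, by omega⟩), by grind [windmillEdge]⟩
    · exact ⟨(y.1, ⟨y.2, by omega⟩), by grind [windmillEdge]⟩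

theorem windmillAut_windmillVertex (σ : Equiv.Perm (Fin n)) (ε : Fin n → Bool) (i : Fin n)
    {c : ℕ} (hc : c ≤ k) :
    windmillAut k σ ε (windmillVertex k i c) =
      windmillVertex k (σ i) (if ε i then k - c else c) := by
  rcases h : windmillVertex k i c with _ | x
  · simp only [windmillVertex_eq_none_iff] at h
    rw [windmillAut_none, eq_comm, windmillVertex_eq_none_iff]
    split <;> omega
  · simp only [windmillVertex_eq_some_iff] at h
    obtain ⟨rfl, rfl⟩ := h
    rw [windmillAut_some, eq_comm, windmillVertex_eq_some_iff, bladeMap_apply]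
    have := x.2.isLt
    split
    · simp only [Fin.val_rev, true_and]; omega
    · simp

theorem map_windmillAut_windmillEdge (σ : Equiv.Perm (Fin n)) (ε : Fin n → Bool)
    (x : Fin n × Fin k) :
    Sym2.map (windmillAut k σ ε) (windmillEdge k x) = windmillEdge k (bladeMap σ ε x) := by
  have := x.2.isLt
  rw [windmillEdge, windmillEdge, Sym2.map_mk, windmillAut_windmillVertex σ ε _ this.le,
    windmillAut_windmillVertex σ ε _ this, bladeMap_apply]
  split
  · rw [Sym2.eq_swap, Fin.val_rev]
    congr 2
    omega
  · rfl

def IsDistinguishingBladeLabeling {α : Type*} (l : Fin n × Fin m → α) : Prop :=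
  ∀ σ ε, (∀ x, l (bladeMap σ ε x) = l x) → σ = 1 ∧ ε = fun _ => false

theorem distinguishingNumber_windmill (hn : 2 ≤ n) (hk : 3 ≤ k) :
    distinguishingNumber (windmill n k) =
      sInf {d | ∃ l : Fin n × Fin (k - 1) → Fin d, IsDistinguishingBladeLabeling l} := by
  unfold distinguishingNumber
  congr 1
  ext d
  constructor
  · rintro ⟨g, hg⟩
    refine ⟨g ∘ some, fun σ ε h => (windmillAut_apply_eq_self_iff hk σ ε).1 (hg _ ?_)⟩
    rintro (_ | x)
    · rfl
    · exact h x
  · rintro ⟨l, hl⟩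
    let x₀ : Fin n × Fin (k - 1) := (⟨0, by omega⟩, ⟨0, by omega⟩)
    refine ⟨fun v => l (v.getD x₀), fun φ h => ?_⟩
    obtain ⟨⟨σ, ε⟩, rfl⟩ := windmillAut_surjective hn hk φ
    exact (windmillAut_apply_eq_self_iff hk σ ε).2 (hl σ ε fun x => h (some x))

theorem distinguishingIndex_windmill (hn : 2 ≤ n) (hk : 3 ≤ k) :
    distinguishingIndex (windmill n k) =
      sInf {d | ∃ l : Fin n × Fin k → Fin d, IsDistinguishingBladeLabeling l} := by
  unfold distinguishingIndex
  congr 1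
  ext d
  constructor
  · rintro ⟨f, hf⟩
    refine ⟨f ∘ windmillEdge k,
      fun σ ε h => (windmillAut_apply_eq_self_iff hk σ ε).1 (hf _ ?_)⟩
    intro e he
    obtain ⟨x, rfl⟩ := exists_windmillEdge_eq he
    rw [map_windmillAut_windmillEdge]
    exact h x
  · rintro ⟨l, hl⟩
    let x₀ : Fin n × Fin k := (⟨0, by omega⟩, ⟨0, by omega⟩)
    have hext := (windmillEdge_injective (n := n) hk).extend_apply l fun _ => l x₀
    refine ⟨Function.extend (windmillEdge k) l fun _ => l x₀, fun φ h => ?_⟩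
    obtain ⟨⟨σ, ε⟩, rfl⟩ := windmillAut_surjective hn hk φ
    refine (windmillAut_apply_eq_self_iff hk σ ε).2 (hl σ ε fun x => ?_)
    have := h _ (windmillEdge_mem_edgeSet (by omega) x)
    rwa [map_windmillAut_windmillEdge, hext, hext] at this

end

theorem windmill_aut_equiv_and_index_eq_number (n k : ℕ) (hn : 2 ≤ n) (hk : 3 ≤ k) :
    Nonempty ((windmill n (k + 1) ≃g windmill n (k + 1)) ≃ (windmill n k ≃g windmill n k)) ∧
      distinguishingIndex (windmill n k) = distinguishingNumber (windmill n (k + 1)) := by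
  refine ⟨⟨(windmillAutEquiv hn (by omega)).symm.trans (windmillAutEquiv hn hk)⟩, ?_⟩
  rw [distinguishingIndex_windmill hn hk, distinguishingNumber_windmill hn (by omega)]
  rfl
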